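/- Let V = EuclideanSpace ℝ (Fin n), Ω ⊆ V a nonempty proper open convex cone, ψ the dual map of Ω, H ⊆ V a linear subspace, C_H := {ω ∈ Ω : ψ(ω) ∈ H^⊥}, and M_H := {(v, ω) ∈ V × V : ω ∈ C_H} (corresponding to V + iC_H ⊆ V^ℂ). Then for every x ∈ M_H one has (x + H × H) ∩ M_H = x + H × {0}; that is, the H^ℂ-orbit of x meets M_H exactly in the H-orbit of x. -/

import Mathlib

open Set Filter
open scoped Pointwise RealInnerProductSpace

/-- A subset `C` of a real vector space is a cone if `t • x ∈ C` for all `x ∈ C`, `t > 0`. -/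
def IsCone {V : Type*} [AddCommGroup V] [Module ℝ V] (C : Set V) : Prop :=
  ∀ x ∈ C, ∀ t : ℝ, 0 < t → t • x ∈ C

/-- The open dual cone of an open cone `Ω` with respect to the inner product. -/
def openDualCone {V : Type*} [NormedAddCommGroup V] [InnerProductSpace ℝ V] (Ω : Set V) :
    Set V :=
  {v | ∀ ω ∈ closure Ω, ω ≠ 0 → 0 < ⟪v, ω⟫}

open MeasureTheory

/-- The characteristic function of a proper open convex cone `Ω ⊆ EuclideanSpace ℝ (Fin n)`:
`φ(ω) = ∫_{Ω*} exp (−⟪ω, y⟫) dy`, the integral over the open dual cone with respect to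
Lebesgue measure. -/
noncomputable def charFun {n : ℕ} (Ω : Set (EuclideanSpace ℝ (Fin n)))
    (ω : EuclideanSpace ℝ (Fin n)) : ℝ :=
  ∫ y in openDualCone Ω, Real.exp (-⟪ω, y⟫)

/-- The dual map `ψ(ω) = ω* := −∇(log φ)(ω)` of a cone `Ω`, where `φ` is its characteristic
function and the gradient is taken with respect to the inner product. -/
noncomputable def dualMap {n : ℕ} (Ω : Set (EuclideanSpace ℝ (Fin n)))
    (ω : EuclideanSpace ℝ (Fin n)) : EuclideanSpace ℝ (Fin n) :=
  -gradient (fun x => Real.log (charFun Ω x)) ω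

/-!
Write `φ` for the characteristic function and `Ω*` for the open dual cone, so that
`ψ = -∇φ / φ` with `φ > 0` and `∇φ(ω) = -∫_{Ω*} e^{-⟪ω, y⟫} y dy`. For `h ∈ H`, the condition
`ψ(ω) ∈ Hᗮ` therefore says `∫_{Ω*} ⟪h, y⟫ e^{-⟪ω, y⟫} dy = 0`. If `ω` and `ω + h` both lie in `C_H`,
the function `J t = ∫_{Ω*} ⟪h, y⟫ e^{-⟪ω + t h, y⟫} dy` vanishes at `t = 0` and `t = 1`, while
`J' t = -∫_{Ω*} ⟪h, y⟫² e^{-⟪ω + t h, y⟫} dy < 0` unless `h = 0`: the hyperplane `hᗮ` is null and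
`Ω*` has positive measure, since it contains the interior of the dual of the salient closed cone
`closure Ω`. Differentiation under the integral sign is justified by `⟪ω, y⟫ ≥ ε ‖y‖` on `Ω*`,
which holds for `ω ∈ Ω` because a ball around `ω` lies in `Ω`.
-/
open Metric Topology InnerProductSpace

lemma pow_mul_exp_neg_mul_le {ε t : ℝ} (hε : 0 < ε) (ht : 0 ≤ t) (k m : ℕ) :
    t ^ k * Real.exp (-(ε * t)) ≤
      Real.exp ε * (k + m).factorial / ε ^ (k + m) * ((1 + t) ^ m)⁻¹ := by
  have hexp : (ε * (1 + t)) ^ (k + m) / (k + m).factorial ≤ Real.exp ε * Real.exp (ε * t) := by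
    rw [← Real.exp_add, ← mul_one_add]
    exact Real.pow_div_factorial_le_exp _ (by positivity) _
  calc t ^ k * Real.exp (-(ε * t))
      ≤ (1 + t) ^ k * Real.exp (-(ε * t)) := by gcongr; linarith
    _ = (ε * (1 + t)) ^ (k + m) / (k + m).factorial * Real.exp (-(ε * t)) *
          ((k + m).factorial / ε ^ (k + m) * ((1 + t) ^ m)⁻¹) := by
        rw [mul_pow, pow_add, pow_add]; field_simp
    _ ≤ Real.exp ε * Real.exp (ε * t) * Real.exp (-(ε * t)) *
          ((k + m).factorial / ε ^ (k + m) * ((1 + t) ^ m)⁻¹) := by gcongr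
    _ = _ := by rw [mul_assoc (Real.exp ε), ← Real.exp_add, add_neg_cancel, Real.exp_zero]; ring

lemma integrable_pow_norm_mul_exp_neg_mul_norm {E : Type*} [NormedAddCommGroup E]
    [NormedSpace ℝ E] [FiniteDimensional ℝ E] [MeasurableSpace E] [BorelSpace E]
    (μ : Measure E) [μ.IsAddHaarMeasure] (k : ℕ) {ε : ℝ} (hε : 0 < ε) :
    Integrable (fun y : E => ‖y‖ ^ k * Real.exp (-(ε * ‖y‖))) μ := by
  set m := Module.finrank ℝ E + 1
  have hm : (Module.finrank ℝ E : ℝ) < (m : ℕ) := by norm_cast; omega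
  refine ((integrable_one_add_norm (μ := μ) hm).const_mul
    (Real.exp ε * (k + m).factorial / ε ^ (k + m))).mono' (by fun_prop) ?_
  refine .of_forall fun y => ?_
  rw [Real.norm_of_nonneg (by positivity), Real.rpow_neg (by positivity), Real.rpow_natCast]
  exact pow_mul_exp_neg_mul_le hε (norm_nonneg y) k m

lemma setIntegral_pos_of_ae_pos {α : Type*} [MeasurableSpace α] {μ : Measure α} {D : Set α}
    {f : α → ℝ} (hμD : 0 < μ D) (hf : IntegrableOn f D μ) (hpos : ∀ᵐ y ∂μ, 0 < f y) :
    0 < ∫ y in D, f y ∂μ := by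
  rw [setIntegral_pos_iff_support_of_nonneg_ae (ae_restrict_of_ae (hpos.mono fun _ => le_of_lt))
    hf, inter_comm, measure_inter_conull (measure_mono_null (fun y hy => ?_) hpos)]
  · exact hμD
  · simp only [mem_compl_iff, Function.mem_support, not_not] at hy
    simp [hy]

section LaplaceIntegral

variable {E : Type*} [NormedAddCommGroup E] [InnerProductSpace ℝ E] {ε : ℝ} {ω ω₀ h y : E}

lemma abs_inner_pow_mul_exp_le (hy : ε * ‖y‖ ≤ ⟪ω, y⟫) (k : ℕ) :
    |⟪h, y⟫ ^ k * Real.exp (-⟪ω, y⟫)| ≤ ‖h‖ ^ k * (‖y‖ ^ k * Real.exp (-(ε * ‖y‖))) := by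
  rw [abs_mul, abs_pow, Real.abs_exp, ← mul_assoc, ← mul_pow]
  gcongr
  exact abs_real_inner_le_norm h y

lemma norm_inner_pow_mul_exp_smul_le (hy : ε * ‖y‖ ≤ ⟪ω, y⟫) (k : ℕ) :
    ‖(⟪h, y⟫ ^ k * Real.exp (-⟪ω, y⟫)) • y‖ ≤
      ‖h‖ ^ k * (‖y‖ ^ (k + 1) * Real.exp (-(ε * ‖y‖))) := by
  rw [norm_smul, Real.norm_eq_abs]
  calc _ ≤ ‖h‖ ^ k * (‖y‖ ^ k * Real.exp (-(ε * ‖y‖))) * ‖y‖ := by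
        gcongr; exact abs_inner_pow_mul_exp_le hy k
    _ = _ := by ring

lemma eventually_half_mul_norm_le_inner {D : Set E} (hε : 0 < ε)
    (hω₀ : ∀ y ∈ D, ε * ‖y‖ ≤ ⟪ω₀, y⟫) :
    ∀ᶠ ω in 𝓝 ω₀, ∀ y ∈ D, ε / 2 * ‖y‖ ≤ ⟪ω, y⟫ := by
  filter_upwards [ball_mem_nhds ω₀ (half_pos hε)] with ω hω y hy
  have hclose : |⟪ω - ω₀, y⟫| ≤ ε / 2 * ‖y‖ :=
    (abs_real_inner_le_norm _ _).trans (by gcongr; exact (mem_ball_iff_norm.mp hω).le)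
  have := hω₀ y hy
  rw [inner_sub_left] at hclose
  linarith [abs_le.mp hclose]

lemma hasGradientAt_inner_pow_mul_exp [CompleteSpace E] (h y : E) (k : ℕ) (ω : E) :
    HasGradientAt (fun ω => ⟪h, y⟫ ^ k * Real.exp (-⟪ω, y⟫))
      (-((⟪h, y⟫ ^ k * Real.exp (-⟪ω, y⟫)) • y)) ω := by
  have hlin : HasFDerivAt (fun ω : E => -⟪ω, y⟫) (-innerSL ℝ y) ω := by
    refine (innerSL ℝ y).hasFDerivAt.neg.congr_of_eventuallyEq (.of_forall fun x => ?_)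
    simp [real_inner_comm]
  rw [hasGradientAt_iff_hasFDerivAt]
  refine (hlin.exp.const_mul (⟪h, y⟫ ^ k)).congr_fderiv ?_
  ext u
  simp
  ring

variable [FiniteDimensional ℝ E] [MeasurableSpace E] [BorelSpace E]

lemma ae_inner_ne_zero (μ : Measure E) [μ.IsAddHaarMeasure] (hh : h ≠ 0) :
    ∀ᵐ y ∂μ, ⟪h, y⟫ ≠ 0 := by
  have hker : LinearMap.ker (innerₛₗ ℝ h) ≠ ⊤ := by
    rw [Ne, LinearMap.ker_eq_top]
    intro h0
    exact hh (by simpa using LinearMap.congr_fun h0 h)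
  rw [ae_iff]
  convert Measure.addHaar_submodule μ _ hker using 2
  ext; simp

variable {μ : Measure E} [μ.IsAddHaarMeasure] {D : Set E}

lemma integrableOn_of_norm_le_mul_pow_norm_mul_exp {F : Type*} [NormedAddCommGroup F]
    {f : E → F} (hD : NullMeasurableSet D μ) (hf : AEStronglyMeasurable f μ) (hε : 0 < ε)
    (C : ℝ) (k : ℕ) (hle : ∀ y ∈ D, ‖f y‖ ≤ C * (‖y‖ ^ k * Real.exp (-(ε * ‖y‖)))) :
    IntegrableOn f D μ :=
  (((integrable_pow_norm_mul_exp_neg_mul_norm μ k hε).const_mul C).restrict).mono' hf.restrict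
    (by filter_upwards [ae_restrict_mem₀ hD] using hle)

lemma integrableOn_inner_pow_mul_exp (hD : NullMeasurableSet D μ) (hε : 0 < ε)
    (hω : ∀ y ∈ D, ε * ‖y‖ ≤ ⟪ω, y⟫) (h : E) (k : ℕ) :
    IntegrableOn (fun y => ⟪h, y⟫ ^ k * Real.exp (-⟪ω, y⟫)) D μ :=
  integrableOn_of_norm_le_mul_pow_norm_mul_exp hD (by fun_prop) hε _ k
    fun y hy => abs_inner_pow_mul_exp_le (hω y hy) k

lemma integrableOn_inner_pow_mul_exp_smul (hD : NullMeasurableSet D μ) (hε : 0 < ε)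
    (hω : ∀ y ∈ D, ε * ‖y‖ ≤ ⟪ω, y⟫) (h : E) (k : ℕ) :
    IntegrableOn (fun y => (⟪h, y⟫ ^ k * Real.exp (-⟪ω, y⟫)) • y) D μ :=
  integrableOn_of_norm_le_mul_pow_norm_mul_exp hD (by fun_prop) hε _ (k + 1)
    fun y hy => norm_inner_pow_mul_exp_smul_le (hω y hy) k

lemma hasGradientAt_setIntegral_inner_pow_mul_exp (hD : NullMeasurableSet D μ) (hε : 0 < ε)
    (hω₀ : ∀ y ∈ D, ε * ‖y‖ ≤ ⟪ω₀, y⟫) (h : E) (k : ℕ) :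
    HasGradientAt (fun ω => ∫ y in D, ⟪h, y⟫ ^ k * Real.exp (-⟪ω, y⟫) ∂μ)
      (-∫ y in D, (⟪h, y⟫ ^ k * Real.exp (-⟪ω₀, y⟫)) • y ∂μ) ω₀ := by
  set F' : E → E → StrongDual ℝ E :=
    fun ω y => toDual ℝ E (-((⟪h, y⟫ ^ k * Real.exp (-⟪ω, y⟫)) • y))
  have hF'meas : AEStronglyMeasurable (F' ω₀) (μ.restrict D) :=
    (toDual ℝ E).continuous.comp_aestronglyMeasurable (by fun_prop)
  have hF'₀ : IntegrableOn (F' ω₀) D μ :=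
    integrableOn_of_norm_le_mul_pow_norm_mul_exp hD (by fun_prop) hε _ (k + 1) fun y hy => by
      rw [LinearIsometryEquiv.norm_map, norm_neg]
      exact norm_inner_pow_mul_exp_smul_le (hω₀ y hy) k
  have hderiv := hasFDerivAt_integral_of_dominated_of_fderiv_le (μ := μ.restrict D)
    (F := fun ω y => ⟪h, y⟫ ^ k * Real.exp (-⟪ω, y⟫)) (F' := F')
    (bound := fun y => ‖h‖ ^ k * (‖y‖ ^ (k + 1) * Real.exp (-(ε / 2 * ‖y‖))))
    (eventually_half_mul_norm_le_inner hε hω₀) (.of_forall fun _ => by fun_prop)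
    (integrableOn_inner_pow_mul_exp hD hε hω₀ h k) hF'meas
    (by
      filter_upwards [ae_restrict_mem₀ hD] with y hy ω hω
      rw [LinearIsometryEquiv.norm_map, norm_neg]
      exact norm_inner_pow_mul_exp_smul_le (hω y hy) k)
    ((integrable_pow_norm_mul_exp_neg_mul_norm μ (k + 1) (half_pos hε)).const_mul _).restrict
    (.of_forall fun y ω _ => (hasGradientAt_inner_pow_mul_exp h y k ω).hasFDerivAt)
  rw [hasGradientAt_iff_hasFDerivAt]
  refine hderiv.congr_fderiv ?_
  ext u
  rw [ContinuousLinearMap.integral_apply hF'₀, toDual_apply_apply, inner_neg_left,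
    real_inner_comm, ← integral_inner (integrableOn_inner_pow_mul_exp_smul hD hε hω₀ h k),
    ← integral_neg]
  simp only [F', toDual_apply_apply, real_inner_comm u, inner_neg_right]

lemma strictAntiOn_setIntegral_inner_mul_exp (hD : NullMeasurableSet D μ) (hμD : 0 < μ D)
    (hh : h ≠ 0) {s : Set ℝ} (hs : Convex ℝ s)
    (hcoer : ∀ t ∈ s, ∃ ε > 0, ∀ y ∈ D, ε * ‖y‖ ≤ ⟪ω + t • h, y⟫) :
    StrictAntiOn (fun t : ℝ => ∫ y in D, ⟪h, y⟫ * Real.exp (-⟪ω + t • h, y⟫) ∂μ) s := by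
  have hderiv : ∀ t ∈ s,
      HasDerivAt (fun t : ℝ => ∫ y in D, ⟪h, y⟫ * Real.exp (-⟪ω + t • h, y⟫) ∂μ)
      (-∫ y in D, ⟪h, y⟫ ^ 2 * Real.exp (-⟪ω + t • h, y⟫) ∂μ) t := by
    intro t ht
    obtain ⟨ε, hε, hω⟩ := hcoer t ht
    have hline : HasDerivAt (fun t : ℝ => ω + t • h) h t := by
      simpa using ((hasDerivAt_id t).smul_const h).const_add ω
    have hcomp := (hasGradientAt_setIntegral_inner_pow_mul_exp hD hε hω h 1).hasFDerivAt
      |>.comp_hasDerivAt t hline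
    have hint := integrableOn_inner_pow_mul_exp_smul hD hε hω h 1
    simp only [pow_one, Function.comp_def] at hcomp hint
    refine hcomp.congr_deriv ?_
    rw [toDual_apply_apply, inner_neg_left, real_inner_comm, ← integral_inner hint]
    simp only [real_inner_smul_right]
    congr 2 with y
    ring
  refine strictAntiOn_of_deriv_neg hs (fun t ht => (hderiv t ht).continuousAt.continuousWithinAt)
    fun t ht => ?_
  obtain ⟨ε, hε, hω⟩ := hcoer t (interior_subset ht)
  rw [(hderiv t (interior_subset ht)).deriv, neg_neg_iff_pos]
  exact setIntegral_pos_of_ae_pos hμD (integrableOn_inner_pow_mul_exp hD hε hω h 2)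
    ((ae_inner_ne_zero μ hh).mono fun y hy => by positivity)

end LaplaceIntegral

section DualCone

variable {E : Type*} [NormedAddCommGroup E] [InnerProductSpace ℝ E] {Ω : Set E}

lemma IsCone.add_mem (hconv : Convex ℝ Ω) (hcone : IsCone Ω) {x y : E} (hx : x ∈ Ω)
    (hy : y ∈ Ω) : x + y ∈ Ω := by
  convert hcone _ (hconv hx hy (by norm_num : (0 : ℝ) ≤ 1 / 2) (by norm_num : (0 : ℝ) ≤ 1 / 2)
    (by norm_num)) 2 two_pos using 1
  module

def properConeClosure (hconv : Convex ℝ Ω) (hcone : IsCone Ω) (h0 : (0 : E) ∈ closure Ω) :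
    ProperCone ℝ E where
  carrier := closure Ω
  add_mem' hx hy := map_mem_closure₂ continuous_add hx hy fun _ ha _ hb =>
    hcone.add_mem hconv ha hb
  zero_mem' := h0
  smul_mem' c x hx := by
    rcases c.2.eq_or_lt with hc | hc
    · rw [show c = 0 from NNReal.eq hc.symm, zero_smul]
      exact h0
    · exact map_mem_closure (continuous_const_smul c.1) hx fun y hy => hcone y hy c hc
  isClosed' := isClosed_closure

lemma ProperCone.interior_innerDual_nonempty [CompleteSpace E] [FiniteDimensional ℝ E]
    (C : ProperCone ℝ E) (hC : (C : Set E) ∩ -C = {0}) :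
    (interior (innerDual (C : Set E) : Set E)).Nonempty := by
  set S : Set E := (innerDual (C : Set E) : Set E)
  have h0 : (0 : E) ∈ S := (innerDual _).zero_mem
  suffices hspan : Submodule.span ℝ S = ⊤ by
    rw [(innerDual _).convex.interior_nonempty_iff_affineSpan_eq_top]
    change affineSpan ℝ S = ⊤
    rw [← insert_eq_of_mem h0, ← SetLike.coe_set_eq, affineSpan_insert_zero, hspan]
    simp
  -- a nonzero `u ⊥ S` would put the whole line `ℝ u` into the bidual `C`
  by_contra hspan
  obtain ⟨u, hu, hu0⟩ := Submodule.exists_mem_ne_zero_of_ne_bot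
    (mt Submodule.orthogonal_eq_bot_iff.mp hspan)
  have hsmul_mem : ∀ c : ℝ, c • u ∈ C := fun c => by
    rw [← innerDual_innerDual C, mem_innerDual]
    intro x hx
    rw [real_inner_smul_right, (Submodule.mem_orthogonal _ _).mp hu x (Submodule.subset_span hx),
      mul_zero]
  exact hu0 (hC.subset ⟨by simpa using hsmul_mem 1, by simpa using hsmul_mem (-1)⟩)

lemma mem_openDualCone_of_mem_interior_innerDual [CompleteSpace E] {v : E}
    (hv : v ∈ interior (ProperCone.innerDual (closure Ω) : Set E)) : v ∈ openDualCone Ω := by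
  intro z hz hz0
  obtain ⟨δ, hδ, hball⟩ := Metric.isOpen_iff.mp isOpen_interior v hv
  have hmem : v - (δ / 2 / ‖z‖) • z ∈ ProperCone.innerDual (closure Ω) := by
    apply interior_subset (hball _)
    rw [mem_ball_iff_norm, sub_sub_cancel_left, norm_neg, norm_smul, Real.norm_of_nonneg
      (by positivity), div_mul_cancel₀ _ (norm_ne_zero_iff.mpr hz0)]
    linarith
  have := ProperCone.mem_innerDual.mp hmem hz
  rw [inner_sub_right, real_inner_smul_right, real_inner_self_eq_norm_sq] at this
  rw [real_inner_comm]
  have : 0 < δ / 2 / ‖z‖ * ‖z‖ ^ 2 := by positivity [norm_pos_iff.mpr hz0]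
  linarith

lemma convex_openDualCone : Convex ℝ (openDualCone Ω) := by
  intro u hu v hv a b ha hb hab z hz hz0
  rw [inner_add_left, real_inner_smul_left, real_inner_smul_left]
  rcases ha.eq_or_lt with rfl | ha
  · simp only [zero_add] at hab; subst hab; simpa using hv z hz hz0
  · nlinarith [hu z hz hz0, hv z hz hz0]

lemma mul_norm_le_inner_of_closedBall_subset {ω y : E} {r : ℝ} (hr : 0 ≤ r)
    (hball : closedBall ω r ⊆ closure Ω) (hy : y ∈ openDualCone Ω) : r * ‖y‖ ≤ ⟪ω, y⟫ := by
  rcases eq_or_ne y 0 with rfl | hy0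
  · simp
  have hmem : ω - (r / ‖y‖) • y ∈ closure Ω := hball <| by
    rw [mem_closedBall_iff_norm, sub_sub_cancel_left, norm_neg, norm_smul, Real.norm_of_nonneg
      (by positivity), div_mul_cancel₀ _ (norm_ne_zero_iff.mpr hy0)]
  have hnonneg : 0 ≤ ⟪y, ω - (r / ‖y‖) • y⟫ := by
    rcases eq_or_ne (ω - (r / ‖y‖) • y) 0 with h | h
    · simp [h]
    · exact (hy _ hmem h).le
  rw [inner_sub_right, real_inner_smul_right, real_inner_self_eq_norm_sq,
    real_inner_comm] at hnonneg
  have : r / ‖y‖ * ‖y‖ ^ 2 = r * ‖y‖ := by field_simp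
  linarith

lemma exists_pos_mul_norm_le_inner (hopen : IsOpen Ω) {ω : E} (hω : ω ∈ Ω) :
    ∃ ε > 0, ∀ y ∈ openDualCone Ω, ε * ‖y‖ ≤ ⟪ω, y⟫ := by
  obtain ⟨r, hr, hball⟩ := Metric.isOpen_iff.mp hopen ω hω
  exact ⟨r / 2, half_pos hr, fun y hy => mul_norm_le_inner_of_closedBall_subset (half_pos hr).le
    ((closedBall_subset_ball (half_lt_self hr)).trans (hball.trans subset_closure)) hy⟩

end DualCone

section CharFun

variable {n : ℕ} {Ω : Set (EuclideanSpace ℝ (Fin n))} {ω h : EuclideanSpace ℝ (Fin n)}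

lemma volume_openDualCone_pos (hconv : Convex ℝ Ω) (hcone : IsCone Ω)
    (hproper : closure Ω ∩ -closure Ω = {0}) : 0 < volume (openDualCone Ω) := by
  obtain ⟨v, hv⟩ := (properConeClosure hconv hcone (hproper.ge (mem_singleton 0)).1)
    |>.interior_innerDual_nonempty hproper
  exact (isOpen_interior.measure_pos volume ⟨v, hv⟩).trans_le
    (measure_mono fun _ => mem_openDualCone_of_mem_interior_innerDual)

lemma charFun_pos (hopen : IsOpen Ω) (hD : 0 < volume (openDualCone Ω)) (hω : ω ∈ Ω) :
    0 < charFun Ω ω := by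
  obtain ⟨ε, hε, hωD⟩ := exists_pos_mul_norm_le_inner hopen hω
  have hint := integrableOn_inner_pow_mul_exp (μ := volume)
    (convex_openDualCone.nullMeasurableSet _) hε hωD 0 0
  simp only [pow_zero, one_mul] at hint
  exact setIntegral_pos_of_ae_pos hD hint (.of_forall fun _ => Real.exp_pos _)

lemma hasGradientAt_charFun (hopen : IsOpen Ω) (hω : ω ∈ Ω) :
    HasGradientAt (charFun Ω) (-∫ y in openDualCone Ω, Real.exp (-⟪ω, y⟫) • y) ω := by
  obtain ⟨ε, hε, hωD⟩ := exists_pos_mul_norm_le_inner hopen hω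
  have hgrad := hasGradientAt_setIntegral_inner_pow_mul_exp (μ := volume)
    (convex_openDualCone.nullMeasurableSet _) hε hωD 0 0
  simp only [pow_zero, one_mul] at hgrad
  exact hgrad

lemma dualMap_eq (hopen : IsOpen Ω) (hD : 0 < volume (openDualCone Ω)) (hω : ω ∈ Ω) :
    dualMap Ω ω = (charFun Ω ω)⁻¹ • ∫ y in openDualCone Ω, Real.exp (-⟪ω, y⟫) • y := by
  have hlog : HasGradientAt (fun x => Real.log (charFun Ω x))
      ((charFun Ω ω)⁻¹ • -∫ y in openDualCone Ω, Real.exp (-⟪ω, y⟫) • y) ω := by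
    rw [hasGradientAt_iff_hasFDerivAt, map_smulₛₗ, RCLike.conj_to_real]
    exact (hasGradientAt_charFun hopen hω).hasFDerivAt.log (charFun_pos hopen hD hω).ne'
  rw [dualMap, hlog.gradient, smul_neg, neg_neg]

lemma inner_dualMap_eq_zero_iff (hopen : IsOpen Ω) (hD : 0 < volume (openDualCone Ω))
    (hω : ω ∈ Ω) :
    ⟪dualMap Ω ω, h⟫ = 0 ↔ ∫ y in openDualCone Ω, ⟪h, y⟫ * Real.exp (-⟪ω, y⟫) = 0 := by
  obtain ⟨ε, hε, hωD⟩ := exists_pos_mul_norm_le_inner hopen hω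
  have hint := integrableOn_inner_pow_mul_exp_smul (μ := volume)
    (convex_openDualCone.nullMeasurableSet _) hε hωD 0 0
  simp only [pow_zero, one_mul] at hint
  rw [dualMap_eq hopen hD hω, real_inner_smul_left, mul_eq_zero,
    or_iff_right (inv_ne_zero (charFun_pos hopen hD hω).ne'), real_inner_comm,
    ← integral_inner hint]
  simp only [real_inner_smul_right, mul_comm]

lemma eq_zero_of_inner_dualMap_eq_zero (hopen : IsOpen Ω) (hconv : Convex ℝ Ω)
    (hD : 0 < volume (openDualCone Ω)) (hω : ω ∈ Ω) (hωh : ω + h ∈ Ω)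
    (h₀ : ⟪dualMap Ω ω, h⟫ = 0) (h₁ : ⟪dualMap Ω (ω + h), h⟫ = 0) : h = 0 := by
  by_contra hh
  have hanti := strictAntiOn_setIntegral_inner_mul_exp
    (convex_openDualCone.nullMeasurableSet volume) hD hh (convex_Icc 0 1)
    fun t ht => exists_pos_mul_norm_le_inner hopen (hconv.add_smul_mem hω hωh ht)
  have := hanti (left_mem_Icc.2 zero_le_one) (right_mem_Icc.2 zero_le_one) zero_lt_one
  simp only [zero_smul, add_zero, one_smul] at this
  rw [(inner_dualMap_eq_zero_iff hopen hD hω).1 h₀,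
    (inner_dualMap_eq_zero_iff hopen hD hωh).1 h₁] at this
  exact lt_irrefl 0 this

end CharFun

theorem stmt_10_general {n : ℕ} (Ω : Set (EuclideanSpace ℝ (Fin n)))
    (hopen : IsOpen Ω) (hconv : Convex ℝ Ω)
    (hcone : IsCone Ω) (hproper : closure Ω ∩ -closure Ω = {0})
    (H : Submodule ℝ (EuclideanSpace ℝ (Fin n)))
    (C_H : Set (EuclideanSpace ℝ (Fin n)))
    (hC_H : C_H = {ω ∈ Ω | dualMap Ω ω ∈ Hᗮ})
    (M_H : Set (EuclideanSpace ℝ (Fin n) × EuclideanSpace ℝ (Fin n)))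
    (hM_H : M_H = {p | p.2 ∈ C_H})
    (x : EuclideanSpace ℝ (Fin n) × EuclideanSpace ℝ (Fin n)) (hx : x ∈ M_H) :
    ({x} + (H : Set (EuclideanSpace ℝ (Fin n))) ×ˢ (H : Set (EuclideanSpace ℝ (Fin n)))) ∩ M_H
      = {x} + (H : Set (EuclideanSpace ℝ (Fin n))) ×ˢ ({0} : Set (EuclideanSpace ℝ (Fin n))) := by
  subst hC_H hM_H
  obtain ⟨hxΩ, hxψ⟩ := hx
  have hD := volume_openDualCone_pos hconv hcone hproper
  ext p
  simp only [singleton_add, mem_inter_iff, mem_image, mem_prod, SetLike.mem_coe, mem_ofPred_eq,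
    mem_singleton_iff]
  constructor
  · rintro ⟨⟨b, ⟨hb₁, hb₂⟩, rfl⟩, hpΩ, hpψ⟩
    exact ⟨b, ⟨hb₁, eq_zero_of_inner_dualMap_eq_zero hopen hconv hD hxΩ hpΩ
      (Submodule.inner_left_of_mem_orthogonal hb₂ hxψ)
      (Submodule.inner_left_of_mem_orthogonal hb₂ hpψ)⟩, rfl⟩
  · rintro ⟨b, ⟨hb₁, hb₂⟩, rfl⟩
    exact ⟨⟨b, ⟨hb₁, hb₂ ▸ H.zero_mem⟩, rfl⟩, by simpa [hb₂] using hxΩ, by simpa [hb₂] using hxψ⟩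

theorem stmt_10 {n : ℕ} (Ω : Set (EuclideanSpace ℝ (Fin n)))
    (hne : Ω.Nonempty) (hopen : IsOpen Ω) (hconv : Convex ℝ Ω)
    (hcone : IsCone Ω) (hproper : closure Ω ∩ -closure Ω = {0})
    (H : Submodule ℝ (EuclideanSpace ℝ (Fin n)))
    (C_H : Set (EuclideanSpace ℝ (Fin n)))
    (hC_H : C_H = {ω ∈ Ω | dualMap Ω ω ∈ Hᗮ})
    (M_H : Set (EuclideanSpace ℝ (Fin n) × EuclideanSpace ℝ (Fin n)))
    (hM_H : M_H = {p | p.2 ∈ C_H})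
    (x : EuclideanSpace ℝ (Fin n) × EuclideanSpace ℝ (Fin n)) (hx : x ∈ M_H) :
    ({x} + (H : Set (EuclideanSpace ℝ (Fin n))) ×ˢ (H : Set (EuclideanSpace ℝ (Fin n)))) ∩ M_H
      = {x} + (H : Set (EuclideanSpace ℝ (Fin n))) ×ˢ ({0} : Set (EuclideanSpace ℝ (Fin n))) :=
  stmt_10_general Ω hopen hconv hcone hproper H C_H hC_H M_H hM_H x hx
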